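/- arXiv:math/0203038 — 4 statements merged into one kernel-verified Lean document; each statement's English description precedes it below -/
import Mathlib

section
/- Let (V, ⟨·,·⟩) be a finite-dimensional real inner product space equipped with an orthogonal complex structure J, and let π be a representation of a group G on V by ℝ-linear maps that preserve the inner product and commute with J. Assume π is complex-irreducible, i.e. the only subspaces of V invariant under both J and every π(g) are {0} and V. Then every π-invariant subspace W of V with W ≠ {0} and W ≠ V is irreducible as a real G-module: every π-invariant subspace E of V contained in W satisfies E = {0} or E = W. -/
open scoped RealInnerProductSpace

/-- For a complex-irreducible unitary representation commuting with an orthogonal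
complex structure `J`, any proper nonzero invariant subspace `W` is irreducible
as a real `G`-module. -/
theorem invariant_subspace_irreducible
    {V : Type*} [NormedAddCommGroup V] [InnerProductSpace ℝ V]
    [FiniteDimensional ℝ V]
    (J : V →ₗ[ℝ] V)
    (hJ2 : ∀ v, J (J v) = -v)
    (hJorth : ∀ x y : V, ⟪J x, J y⟫ = ⟪x, y⟫)
    {G : Type*} [Group G] (π : Representation ℝ G V)
    (hπorth : ∀ (g : G) (x y : V), ⟪π g x, π g y⟫ = ⟪x, y⟫)
    (hπJ : ∀ (g : G) (v : V), π g (J v) = J (π g v))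
    (hirr : ∀ W : Submodule ℝ V, (∀ v ∈ W, J v ∈ W) →
      (∀ (g : G), ∀ v ∈ W, π g v ∈ W) → W = ⊥ ∨ W = ⊤) :
    ∀ W : Submodule ℝ V, (∀ (g : G), ∀ v ∈ W, π g v ∈ W) →
      W ≠ ⊥ → W ≠ ⊤ →
      ∀ E : Submodule ℝ V, E ≤ W → (∀ (g : G), ∀ v ∈ E, π g v ∈ E) →
        E = ⊥ ∨ E = W := by
  intro W hWinv hWne hWnetop E hEW hEinv
  have hmap : ∀ S : Submodule ℝ V, (∀ g, ∀ v ∈ S, π g v ∈ S) →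
      ∀ g, ∀ v ∈ S.map J, π g v ∈ S.map J := by
    intro S hS g v hv
    obtain ⟨w, hw, rfl⟩ := hv
    exact ⟨π g w, hS g w hw, (hπJ g w).symm⟩
  -- W ⊓ J W = ⊥
  have hWJW : W ⊓ W.map J = ⊥ := by
    have hJinv : ∀ v ∈ W ⊓ W.map J, J v ∈ W ⊓ W.map J := by
      intro v hv
      obtain ⟨hv1, w, hw, rfl⟩ := Submodule.mem_inf.mp hv
      refine Submodule.mem_inf.mpr ⟨?_, ⟨J w, hv1, rfl⟩⟩
      rw [hJ2 w]
      exact W.neg_mem hw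
    have hpinv : ∀ g, ∀ v ∈ W ⊓ W.map J, π g v ∈ W ⊓ W.map J := by
      intro g v hv
      obtain ⟨hv1, hv2⟩ := Submodule.mem_inf.mp hv
      exact Submodule.mem_inf.mpr ⟨hWinv g v hv1, hmap W hWinv g v hv2⟩
    rcases hirr (W ⊓ W.map J) hJinv hpinv with h | h
    · exact h
    · exact absurd (top_le_iff.mp (h ▸ inf_le_left)) hWnetop
  have hJinvE : ∀ v ∈ E ⊔ E.map J, J v ∈ E ⊔ E.map J := by
    intro v hv
    obtain ⟨e, he, jf, hjf, rfl⟩ := Submodule.mem_sup.mp hv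
    obtain ⟨f, hf, rfl⟩ := hjf
    refine Submodule.mem_sup.mpr ⟨-f, E.neg_mem hf, J e, ⟨e, he, rfl⟩, ?_⟩
    rw [map_add, hJ2 f]
    abel
  have hpinvE : ∀ g, ∀ v ∈ E ⊔ E.map J, π g v ∈ E ⊔ E.map J := by
    intro g v hv
    obtain ⟨e, he, jf, hjf, rfl⟩ := Submodule.mem_sup.mp hv
    exact Submodule.mem_sup.mpr ⟨π g e, hEinv g e he, π g jf, hmap E hEinv g jf hjf,
      (map_add (π g) e jf).symm⟩
  rcases hirr (E ⊔ E.map J) hJinvE hpinvE with h | h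
  · left
    exact le_bot_iff.mp (h ▸ (le_sup_left : E ≤ E ⊔ E.map J))
  · right
    refine le_antisymm hEW ?_
    intro w hw
    have hw' : w ∈ E ⊔ E.map J := h ▸ Submodule.mem_top
    obtain ⟨e, he, jf, hjf, rfl⟩ := Submodule.mem_sup.mp hw'
    have h1 : jf ∈ W := by
      have heq : jf = (e + jf) - e := by abel
      rw [heq]
      exact W.sub_mem hw (hEW he)
    have h2 : jf ∈ W.map J := Submodule.map_mono hEW hjf
    have hz : jf = 0 := by
      have := hWJW ▸ Submodule.mem_inf.mpr ⟨h1, h2⟩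
      exact (Submodule.mem_bot ℝ).mp this
    rw [hz, add_zero]
    exact he
end

section
/- Let (V, ⟨·,·⟩) be a finite-dimensional real inner product space equipped with an orthogonal complex structure J, and let π be a representation of a group G on V by ℝ-linear maps that preserve the inner product and commute with J. Assume π is complex-irreducible, i.e. the only subspaces of V invariant under both J and every π(g) are {0} and V. Then for every π-invariant subspace W of V with W ≠ {0} and W ≠ V, the subspaces W and JW are orthogonal: ⟨v, Jw⟩ = 0 for all v, w ∈ W. -/
open scoped RealInnerProductSpace

/-!
Let `P` be the orthogonal projection onto `W`. Since `W` and `Wᗮ` are `π`-invariant, `P` commutes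
with `π`, so the symmetric operator `A = P - J P J` commutes with both `π` and `J`. An eigenspace
of `A` is then a nonzero `J`- and `π`-invariant subspace, hence all of `V`: `A = μ • id`.
On `W` this reads `P (J w) = (μ - 1) • J w`. If `μ ≠ 1`, then `J W ⊆ W`, contradicting
irreducibility; so `μ = 1`, i.e. `P (J w) = 0`, which is the orthogonality of `W` and `J W`.
-/

namespace LinearMap

variable {V : Type*} [AddCommGroup V] [Module ℝ V]

/-- Twice the `J`-linear part of `T`, when `J ∘ J = -1`. -/
def complexLinearPart (J T : V →ₗ[ℝ] V) : V →ₗ[ℝ] V := T - J ∘ₗ T ∘ₗ J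

@[simp]
theorem complexLinearPart_apply (J T : V →ₗ[ℝ] V) (v : V) :
    complexLinearPart J T v = T v - J (T (J v)) := rfl

theorem complexLinearPart_apply_comm {J : V →ₗ[ℝ] V} (hJ2 : ∀ v, J (J v) = -v) (T : V →ₗ[ℝ] V)
    (v : V) : complexLinearPart J T (J v) = J (complexLinearPart J T v) := by
  simp only [complexLinearPart_apply, map_sub, hJ2, map_neg]
  abel

theorem complexLinearPart_apply_comm_of_comm {J T U : V →ₗ[ℝ] V} (hTU : ∀ v, T (U v) = U (T v))
    (hJU : ∀ v, U (J v) = J (U v)) (v : V) :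
    complexLinearPart J T (U v) = U (complexLinearPart J T v) := by
  simp only [complexLinearPart_apply, map_sub, hTU, ← hJU]

end LinearMap

section

variable {V : Type*} [NormedAddCommGroup V] [InnerProductSpace ℝ V]

theorem inner_apply_left_eq_neg_inner_apply_right {J : V →ₗ[ℝ] V} (hJ2 : ∀ v, J (J v) = -v)
    (hJorth : ∀ x y : V, ⟪J x, J y⟫ = ⟪x, y⟫) (x y : V) : ⟪J x, y⟫ = -⟪x, J y⟫ := by
  calc ⟪J x, y⟫ = -⟪J x, J (J y)⟫ := by rw [hJ2, inner_neg_right, neg_neg]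
    _ = -⟪x, J y⟫ := by rw [hJorth]

theorem LinearMap.IsSymmetric.complexLinearPart {T J : V →ₗ[ℝ] V} (hT : T.IsSymmetric)
    (hJ2 : ∀ v, J (J v) = -v) (hJorth : ∀ x y : V, ⟪J x, J y⟫ = ⟪x, y⟫) :
    (LinearMap.complexLinearPart J T).IsSymmetric := by
  intro x y
  have hJskew := inner_apply_left_eq_neg_inner_apply_right hJ2 hJorth
  simp only [LinearMap.complexLinearPart_apply, inner_sub_left, inner_sub_right]
  rw [hT, hJskew, hT, hJskew, neg_neg]

/-- With `U'` an adjoint of `U`, the invariance hypotheses say that `W` and `Wᗮ` are both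
`U`-invariant. -/
theorem Submodule.starProjection_apply_comm (W : Submodule ℝ V) [W.HasOrthogonalProjection]
    {U U' : V →ₗ[ℝ] V} (hadj : ∀ x y, ⟪U x, y⟫ = ⟪x, U' y⟫) (hU : ∀ v ∈ W, U v ∈ W)
    (hU' : ∀ v ∈ W, U' v ∈ W) (x : V) :
    W.starProjection (U x) = U (W.starProjection x) := by
  refine W.eq_starProjection_of_mem_of_inner_eq_zero (hU _ (W.starProjection_apply_mem x)) ?_
  intro u hu
  rw [← map_sub, hadj]
  exact W.starProjection_inner_eq_zero x _ (hU' u hu)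

theorem Representation.inner_apply_eq_inner_inv_apply {G : Type*} [Group G]
    (π : Representation ℝ G V) (hπorth : ∀ (g : G) (x y : V), ⟪π g x, π g y⟫ = ⟪x, y⟫)
    (g : G) (x y : V) : ⟪π g x, y⟫ = ⟪x, π g⁻¹ y⟫ := by
  rw [← hπorth g x, π.self_inv_apply]

/-- Schur's lemma for symmetric operators. -/
theorem LinearMap.IsSymmetric.exists_eq_smul_of_irreducible [FiniteDimensional ℝ V]
    [Nontrivial V] {T : V →ₗ[ℝ] V} (hT : T.IsSymmetric) (J : V →ₗ[ℝ] V)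
    {G : Type*} [Group G] (π : Representation ℝ G V)
    (hTJ : ∀ v, T (J v) = J (T v)) (hTπ : ∀ (g : G) (v : V), T (π g v) = π g (T v))
    (hirr : ∀ W : Submodule ℝ V, (∀ v ∈ W, J v ∈ W) →
      (∀ (g : G), ∀ v ∈ W, π g v ∈ W) → W = ⊥ ∨ W = ⊤) :
    ∃ μ : ℝ, ∀ v, T v = μ • v := by
  obtain ⟨μ, hμ⟩ : ∃ μ : ℝ, Module.End.HasEigenvalue T μ :=
    ⟨_, hT.hasEigenvalue_iSup_of_finiteDimensional⟩
  have hJinv : ∀ v ∈ Module.End.eigenspace T μ, J v ∈ Module.End.eigenspace T μ := by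
    intro v hv
    rw [Module.End.mem_eigenspace_iff] at hv ⊢
    rw [hTJ, hv, map_smul]
  have hπinv : ∀ (g : G), ∀ v ∈ Module.End.eigenspace T μ, π g v ∈ Module.End.eigenspace T μ := by
    intro g v hv
    rw [Module.End.mem_eigenspace_iff] at hv ⊢
    rw [hTπ, hv, map_smul]
  have htop : Module.End.eigenspace T μ = ⊤ :=
    (hirr _ hJinv hπinv).resolve_left hμ
  exact ⟨μ, fun v => Module.End.mem_eigenspace_iff.mp (htop ▸ Submodule.mem_top)⟩

theorem Submodule.starProjection_apply_of_complexLinearPart_eq_smul {J : V →ₗ[ℝ] V}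
    (hJ2 : ∀ v, J (J v) = -v) (W : Submodule ℝ V) [W.HasOrthogonalProjection] {μ : ℝ}
    (hμ : ∀ v, LinearMap.complexLinearPart J W.starProjection v = μ • v) {w : V} (hw : w ∈ W) :
    W.starProjection (J w) = (μ - 1) • J w := by
  have hJPJ : J (W.starProjection (J w)) = (1 - μ) • w := by
    have := hμ w
    simp only [LinearMap.complexLinearPart_apply, ContinuousLinearMap.coe_coe,
      W.starProjection_eq_self_iff.mpr hw] at this
    rw [sub_smul, one_smul, ← this, sub_sub_cancel]
  calc W.starProjection (J w) = -J (J (W.starProjection (J w))) := by rw [hJ2, neg_neg]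
    _ = (μ - 1) • J w := by rw [hJPJ, map_smul, ← neg_smul, neg_sub]

end

/-- For a complex-irreducible unitary representation commuting with an orthogonal
complex structure `J`, any proper nonzero invariant subspace `W` is orthogonal
to `JW`. -/
theorem invariant_subspace_orthogonal_J
    {V : Type*} [NormedAddCommGroup V] [InnerProductSpace ℝ V]
    [FiniteDimensional ℝ V]
    (J : V →ₗ[ℝ] V)
    (hJ2 : ∀ v, J (J v) = -v)
    (hJorth : ∀ x y : V, ⟪J x, J y⟫ = ⟪x, y⟫)
    {G : Type*} [Group G] (π : Representation ℝ G V)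
    (hπorth : ∀ (g : G) (x y : V), ⟪π g x, π g y⟫ = ⟪x, y⟫)
    (hπJ : ∀ (g : G) (v : V), π g (J v) = J (π g v))
    (hirr : ∀ W : Submodule ℝ V, (∀ v ∈ W, J v ∈ W) →
      (∀ (g : G), ∀ v ∈ W, π g v ∈ W) → W = ⊥ ∨ W = ⊤) :
    ∀ W : Submodule ℝ V, (∀ (g : G), ∀ v ∈ W, π g v ∈ W) →
      W ≠ ⊥ → W ≠ ⊤ →
      ∀ v ∈ W, ∀ w ∈ W, ⟪v, J w⟫ = 0 := by
  intro W hWπ hWbot hWtop v hv w hw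
  obtain ⟨x, -, hx0⟩ := W.exists_mem_ne_zero_of_ne_bot hWbot
  have : Nontrivial V := nontrivial_of_ne x 0 hx0
  have hPπ (g : G) (x : V) : W.starProjection (π g x) = π g (W.starProjection x) :=
    W.starProjection_apply_comm (π.inner_apply_eq_inner_inv_apply hπorth g) (hWπ g) (hWπ g⁻¹) x
  obtain ⟨μ, hμ⟩ := (W.starProjection_isSymmetric.complexLinearPart hJ2 hJorth)
    |>.exists_eq_smul_of_irreducible J π (LinearMap.complexLinearPart_apply_comm hJ2 _)
      (fun g => LinearMap.complexLinearPart_apply_comm_of_comm (hPπ g) (hπJ g)) hirr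
  have hPJ : ∀ u ∈ W, W.starProjection (J u) = (μ - 1) • J u := fun _ =>
    W.starProjection_apply_of_complexLinearPart_eq_smul hJ2 hμ
  have hμ1 : μ = 1 := by
    by_contra hne
    have hJW (u : V) (hu : u ∈ W) : J u ∈ W := by
      have hu' : J u = (μ - 1)⁻¹ • W.starProjection (J u) := by
        rw [hPJ u hu, smul_smul, inv_mul_cancel₀ (sub_ne_zero.mpr hne), one_smul]
      exact hu' ▸ W.smul_mem _ (W.starProjection_apply_mem _)
    exact (hirr W hJW hWπ).elim hWbot hWtop
  calc ⟪v, J w⟫ = ⟪W.starProjection v, J w⟫ := by rw [W.starProjection_eq_self_iff.mpr hv]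
    _ = ⟪v, W.starProjection (J w)⟫ := W.inner_starProjection_left_eq_right v (J w)
    _ = 0 := by rw [hPJ w hw, hμ1, sub_self, zero_smul, inner_zero_right]
end

section
/- Let (V, ⟨·,·⟩) be a finite-dimensional real inner product space equipped with an orthogonal complex structure J. Let A and B be skew-adjoint ℝ-linear endomorphisms of V that both anticommute with J (A ∘ J = -J ∘ A and B ∘ J = -J ∘ B). If [A, [A, B]] = 0 and [A, [A, B ∘ J]] = 0, where [·,·] denotes the commutator of endomorphisms, then A ∘ B = 0 and B ∘ A = 0. -/
open scoped RealInnerProductSpace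

open LinearMap in
lemma trace_eq_sum_inner_aux {V : Type*} [NormedAddCommGroup V] [InnerProductSpace ℝ V]
    [FiniteDimensional ℝ V] (T : V →ₗ[ℝ] V) :
    LinearMap.trace ℝ V T =
      ∑ i, ⟪(stdOrthonormalBasis ℝ V) i, T ((stdOrthonormalBasis ℝ V) i)⟫ := by
  set b := stdOrthonormalBasis ℝ V
  rw [LinearMap.trace_eq_matrix_trace ℝ b.toBasis, Matrix.trace]
  refine Finset.sum_congr rfl fun i _ => ?_
  rw [Matrix.diag_apply, LinearMap.toMatrix_apply, OrthonormalBasis.coe_toBasis,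
    OrthonormalBasis.coe_toBasis_repr_apply, OrthonormalBasis.repr_apply_apply]

/-- Equation (4.5) of the paper: if `A`, `B` are skew-adjoint endomorphisms
anticommuting with an orthogonal complex structure `J`, and
`[A,[A,B]] = 0` and `[A,[A,B∘J]] = 0`, then `A ∘ B = 0` and `B ∘ A = 0`. -/
theorem double_commutator_vanishing
    {V : Type*} [NormedAddCommGroup V] [InnerProductSpace ℝ V]
    [FiniteDimensional ℝ V]
    (J A B : V →ₗ[ℝ] V)
    (hJ2 : ∀ v, J (J v) = -v)
    (hJorth : ∀ x y : V, ⟪J x, J y⟫ = ⟪x, y⟫)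
    (hAskew : ∀ x y : V, ⟪A x, y⟫ = -⟪x, A y⟫)
    (hBskew : ∀ x y : V, ⟪B x, y⟫ = -⟪x, B y⟫)
    (hAJ : A ∘ₗ J = -(J ∘ₗ A))
    (hBJ : B ∘ₗ J = -(J ∘ₗ B))
    (h1 : A ∘ₗ (A ∘ₗ B - B ∘ₗ A) - (A ∘ₗ B - B ∘ₗ A) ∘ₗ A = 0)
    (h2 : A ∘ₗ (A ∘ₗ (B ∘ₗ J) - (B ∘ₗ J) ∘ₗ A) -
          (A ∘ₗ (B ∘ₗ J) - (B ∘ₗ J) ∘ₗ A) ∘ₗ A = 0) :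
    A ∘ₗ B = 0 ∧ B ∘ₗ A = 0 := by
  -- work in the ring of endomorphisms
  have hja : J * A = -(A * J) := by
    rw [show J * A = J ∘ₗ A from rfl, ← neg_neg (J ∘ₗ A), ← hAJ]; rfl
  have hj2 : J * J = -1 := by
    ext v; simpa using hJ2 v
  have h1' : A * (A * B - B * A) - (A * B - B * A) * A = 0 := h1
  have h2' : A * (A * (B * J) - (B * J) * A) - (A * (B * J) - (B * J) * A) * A = 0 := h2
  have e1 : A * A * B - 2 * (A * B * A) + B * (A * A) = 0 := by
    rw [← h1']; noncomm_ring
  have hbja : (B * J) * A = -((B * A) * J) := by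
    rw [mul_assoc, hja]; noncomm_ring
  have e2j : (A * A * B + 2 * (A * B * A) + B * (A * A)) * J = 0 := by
    rw [← h2']
    simp only [sub_mul, mul_sub, mul_assoc, mul_neg, neg_mul, neg_neg, hja]
    noncomm_ring
  have e2 : A * A * B + 2 * (A * B * A) + B * (A * A) = 0 := by
    have := congrArg (· * J) e2j
    simp only [zero_mul, mul_assoc, hj2, mul_neg_one] at this
    have hX := neg_eq_zero.mp this
    rw [← hX]; noncomm_ring
  have hABA : A * B * A = 0 := by
    have h4 : A*B*A + (A*B*A + (A*B*A + A*B*A)) = 0 := by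
      have := congrArg₂ (· - ·) e2 e1
      simp only [sub_zero] at this
      rw [← this]; noncomm_ring
    have : (4 : ℝ) • (A * B * A) = 0 := by
      rw [show (4:ℝ) • (A*B*A) = A*B*A + (A*B*A + (A*B*A + A*B*A)) by module]
      exact h4
    exact (smul_eq_zero.mp this).resolve_left (by norm_num)
  have hA2B : A * A * B = -(B * (A * A)) := by
    have h2s : A*A*B + B*(A*A) = 0 := by
      have := congrArg₂ (· + ·) e1 e2
      simp only [add_zero] at this
      have h8 : (2:ℝ) • (A*A*B + B*(A*A)) = 0 := by
        rw [show (2:ℝ) • (A*A*B + B*(A*A)) =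
          (A*A*B - 2*(A*B*A) + B*(A*A)) + (A*A*B + 2*(A*B*A) + B*(A*A)) by module, this]
      exact (smul_eq_zero.mp h8).resolve_left (by norm_num)
    exact eq_neg_of_add_eq_zero_left h2s
  set b := stdOrthonormalBasis ℝ V with hb
  have ht : LinearMap.trace ℝ V (B * ((A * A) * B)) = 0 := by
    have h := LinearMap.trace_mul_comm ℝ B ((A * A) * B)
    have hneg : ((A * A) * B) * B = -(B * ((A * A) * B)) := by
      conv_lhs => rw [show ((A * A) * B) * B = (A * A * B) * B from rfl, hA2B]
      noncomm_ring
    rw [hneg, map_neg] at h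
    linarith
  have hsum : ∑ i, ⟪(A ∘ₗ B) (b i), (A ∘ₗ B) (b i)⟫ = 0 := by
    rw [← ht, trace_eq_sum_inner_aux]
    refine Finset.sum_congr rfl fun i _ => ?_
    have h1i : ⟪(A ∘ₗ B) (b i), (A ∘ₗ B) (b i)⟫ = ⟪A (B (b i)), A (B (b i))⟫ := rfl
    have h2i : (B * ((A * A) * B)) (b i) = B (A (A (B (b i)))) := rfl
    rw [h1i, h2i, hAskew (B (b i)) (A (B (b i))), hBskew (b i) (A (A (B (b i))))]
    ring
  have hAB : A ∘ₗ B = 0 := by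
    refine b.toBasis.ext fun i => ?_
    have hnn : ∀ i ∈ Finset.univ, (0:ℝ) ≤ ⟪(A ∘ₗ B) (b i), (A ∘ₗ B) (b i)⟫ :=
      fun i _ => real_inner_self_nonneg
    have := (Finset.sum_eq_zero_iff_of_nonneg hnn).mp hsum i (Finset.mem_univ i)
    simpa [OrthonormalBasis.coe_toBasis] using inner_self_eq_zero.mp this
  refine ⟨hAB, ?_⟩
  ext x
  have hx : ⟪B (A x), B (A x)⟫ = (0:ℝ) := by
    rw [hBskew (A x) (B (A x)), hAskew x (B (B (A x)))]
    have : A (B (B (A x))) = (A ∘ₗ B) (B (A x)) := rfl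
    rw [this, hAB]
    simp
  simpa using inner_self_eq_zero.mp hx
end

section
/- Let (V, ⟨·,·⟩) be a finite-dimensional real inner product space equipped with an orthogonal complex structure J. Let p be a linear subspace of the space of ℝ-linear endomorphisms of V such that: every A ∈ p is skew-adjoint and anticommutes with J (A ∘ J = -J ∘ A); A ∈ p implies A ∘ J ∈ p; and [p, k] ⊆ p, where k denotes the linear span of {[A, B] : A, B ∈ p} and [·,·] is the commutator. Then p ∩ k = {0}, k is closed under the commutator bracket, and h = p + k is a Lie subalgebra of the skew-adjoint endomorphisms of V (i.e. h is closed under the commutator and consists of skew-adjoint maps), with [p, p] ⊆ k and [p, k] ⊆ p. -/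
open scoped RealInnerProductSpace

/-- Proposition 6.1 of the paper: if `p` is a space of skew-adjoint endomorphisms
anticommuting with the orthogonal complex structure `J`, stable under `A ↦ A ∘ J`,
and `k` is the span of commutators of elements of `p` with `[p, k] ⊆ p`, then
`p ∩ k = 0`, `k` is a Lie subalgebra, and `h = p + k` is a Lie subalgebra of the
skew-adjoint endomorphisms, with `[p, p] ⊆ k` and `[p, k] ⊆ p`. -/
theorem holonomy_lie_algebra_structure
    {V : Type*} [NormedAddCommGroup V] [InnerProductSpace ℝ V]
    [FiniteDimensional ℝ V]
    (J : V →ₗ[ℝ] V)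
    (hJ2 : ∀ v, J (J v) = -v)
    (hJorth : ∀ x y : V, ⟪J x, J y⟫ = ⟪x, y⟫)
    (p : Submodule ℝ (V →ₗ[ℝ] V))
    (hskew : ∀ A ∈ p, ∀ x y : V, ⟪A x, y⟫ = -⟪x, A y⟫)
    (hanti : ∀ A ∈ p, A ∘ₗ J = -(J ∘ₗ A))
    (hpJ : ∀ A ∈ p, A ∘ₗ J ∈ p)
    (k : Submodule ℝ (V →ₗ[ℝ] V))
    (hk : k = Submodule.span ℝ
      {X : V →ₗ[ℝ] V | ∃ A ∈ p, ∃ B ∈ p, X = A ∘ₗ B - B ∘ₗ A})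
    (hpk : ∀ A ∈ p, ∀ B ∈ k, A ∘ₗ B - B ∘ₗ A ∈ p) :
    p ⊓ k = ⊥ ∧
    (∀ A ∈ k, ∀ B ∈ k, A ∘ₗ B - B ∘ₗ A ∈ k) ∧
    (∀ A ∈ p ⊔ k, ∀ B ∈ p ⊔ k, A ∘ₗ B - B ∘ₗ A ∈ p ⊔ k) ∧
    (∀ A ∈ p ⊔ k, ∀ x y : V, ⟪A x, y⟫ = -⟪x, A y⟫) ∧
    (∀ A ∈ p, ∀ B ∈ p, A ∘ₗ B - B ∘ₗ A ∈ k) ∧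
    (∀ A ∈ p, ∀ B ∈ k, A ∘ₗ B - B ∘ₗ A ∈ p) := by
  have hantiv : ∀ A ∈ p, ∀ v, A (J v) = -J (A v) := by
    intro A hA v
    have := LinearMap.congr_fun (hanti A hA) v
    simpa using this
  have hpp : ∀ A ∈ p, ∀ B ∈ p, A ∘ₗ B - B ∘ₗ A ∈ k := by
    intro A hA B hB
    rw [hk]
    exact Submodule.subset_span ⟨A, hA, B, hB, rfl⟩
  -- elements of k commute with J
  have hcomm : ∀ X ∈ k, ∀ v, X (J v) = J (X v) := by
    intro X hX
    rw [hk] at hX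
    induction hX using Submodule.span_induction with
    | mem x hx =>
      obtain ⟨A, hA, B, hB, rfl⟩ := hx
      intro v
      simp [LinearMap.sub_apply, LinearMap.comp_apply, hantiv A hA, hantiv B hB]
    | zero => intro v; simp
    | add x y _ _ hx hy => intro v; simp [hx v, hy v]
    | smul c x _ hx => intro v; simp [hx v]
  -- elements of k are skew-adjoint
  have hskewk : ∀ X ∈ k, ∀ x y : V, ⟪X x, y⟫ = -⟪x, X y⟫ := by
    intro X hX
    rw [hk] at hX
    induction hX using Submodule.span_induction with
    | mem x hx =>
      obtain ⟨A, hA, B, hB, rfl⟩ := hx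
      intro u w
      simp only [LinearMap.sub_apply, LinearMap.comp_apply, inner_sub_left, inner_sub_right,
        hskew A hA, hskew B hB, inner_neg_right, inner_neg_left, neg_neg]
      ring
    | zero => intro u w; simp
    | add x y _ _ hx hy =>
      intro u w
      simp [inner_add_left, inner_add_right, hx u w, hy u w]
      ring
    | smul c x _ hx =>
      intro u w
      simp [real_inner_smul_left, real_inner_smul_right, hx u w]
  have hjac : ∀ A B X : V →ₗ[ℝ] V,
      (A ∘ₗ B - B ∘ₗ A) ∘ₗ X - X ∘ₗ (A ∘ₗ B - B ∘ₗ A) =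
      (A ∘ₗ (B ∘ₗ X - X ∘ₗ B) - (B ∘ₗ X - X ∘ₗ B) ∘ₗ A) -
      (B ∘ₗ (A ∘ₗ X - X ∘ₗ A) - (A ∘ₗ X - X ∘ₗ A) ∘ₗ B) := by
    intro A B X
    ext v
    simp [LinearMap.sub_apply, LinearMap.comp_apply, map_sub]
    abel
  have hkk : ∀ A ∈ k, ∀ B ∈ k, A ∘ₗ B - B ∘ₗ A ∈ k := by
    intro A hA B hB
    rw [hk] at hA
    induction hA using Submodule.span_induction with
    | mem x hx =>
      obtain ⟨C, hC, D, hD, rfl⟩ := hx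
      rw [hjac C D B]
      exact Submodule.sub_mem k (hpp C hC _ (hpk D hD B hB)) (hpp D hD _ (hpk C hC B hB))
    | zero => simpa using Submodule.zero_mem k
    | add x y _ _ hx hy =>
      have : (x + y) ∘ₗ B - B ∘ₗ (x + y) = (x ∘ₗ B - B ∘ₗ x) + (y ∘ₗ B - B ∘ₗ y) := by
        ext v; simp; abel
      rw [this]
      exact Submodule.add_mem k hx hy
    | smul c x _ hx =>
      have : (c • x) ∘ₗ B - B ∘ₗ (c • x) = c • (x ∘ₗ B - B ∘ₗ x) := by
        ext v; simp [smul_sub]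
      rw [this]
      exact Submodule.smul_mem k c hx
  refine ⟨?_, hkk, ?_, ?_, hpp, hpk⟩
  · rw [eq_bot_iff]
    rintro A ⟨hAp, hAk⟩
    have hA0 : A = 0 := by
      ext v
      have h1 := hantiv A hAp v
      have h2 := hcomm A hAk v
      have h3 : J (A v) = 0 := by
        have h4 : J (A v) + J (A v) = 0 := add_eq_zero_iff_neg_eq.mpr (h1.symm.trans h2)
        have h5 : (2 : ℝ) • J (A v) = 0 := by rw [two_smul]; exact h4
        simpa using (smul_eq_zero.mp h5).resolve_left (by norm_num)
      have := congrArg J h3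
      rw [hJ2] at this
      simpa using this.symm
    simp [hA0]
  · intro A hA B hB
    obtain ⟨P1, hP1, K1, hK1, rfl⟩ := Submodule.mem_sup.mp hA
    obtain ⟨P2, hP2, K2, hK2, rfl⟩ := Submodule.mem_sup.mp hB
    have hsplit : (P1 + K1) ∘ₗ (P2 + K2) - (P2 + K2) ∘ₗ (P1 + K1) =
        ((P1 ∘ₗ P2 - P2 ∘ₗ P1) + (K1 ∘ₗ K2 - K2 ∘ₗ K1)) +
        ((P1 ∘ₗ K2 - K2 ∘ₗ P1) + (-(P2 ∘ₗ K1 - K1 ∘ₗ P2))) := by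
      ext v; simp; abel
    rw [hsplit]
    refine Submodule.add_mem _ (Submodule.mem_sup_right ?_) (Submodule.mem_sup_left ?_)
    · exact Submodule.add_mem k (hpp P1 hP1 P2 hP2) (hkk K1 hK1 K2 hK2)
    · exact Submodule.add_mem p (hpk P1 hP1 K2 hK2) (Submodule.neg_mem p (hpk P2 hP2 K1 hK1))
  · intro A hA x y
    obtain ⟨P, hP, K, hK, rfl⟩ := Submodule.mem_sup.mp hA
    simp only [LinearMap.add_apply, inner_add_left, inner_add_right, hskew P hP x y,
      hskewk K hK x y]
    ring
end
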